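/- Let K, T ⊂ ℝⁿ be centrally symmetric convex bodies which are 2-convex with constants γ_K > 0 and γ_T > 0 respectively. Define their 2-Firey sum K +₂ T as the unit ball of the norm ‖z‖_{K+₂T} = (inf{‖x‖_K² + ‖y‖_T² : z = x + y})^{1/2}. Then K +₂ T is a centrally symmetric convex body which is 2-convex with constant min(γ_K, γ_T)/8. -/

import Mathlib

open MeasureTheory
open scoped RealInnerProductSpace

noncomputable section

/-- A centrally symmetric convex body: compact, convex, with nonempty interior,
and symmetric about the origin. -/
def IsSymmConvexBody {E : Type*} [NormedAddCommGroup E] [NormedSpace ℝ E]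
    (K : Set E) : Prop :=
  IsCompact K ∧ Convex ℝ K ∧ (interior K).Nonempty ∧ K = -K

/-- The modulus of convexity of `K`, defined via the gauge (Minkowski functional) of `K`. -/
def modulusOfConvexity {E : Type*} [AddCommGroup E] [Module ℝ E]
    (K : Set E) (ε : ℝ) : ℝ :=
  sInf { d | ∃ x y : E, gauge K x ≤ 1 ∧ gauge K y ≤ 1 ∧ ε ≤ gauge K (x - y) ∧
    d = 1 - gauge K ((2:ℝ)⁻¹ • (x + y)) }

/-- `K` is 2-convex with constant `α`: `δ_K(ε) ≥ α ε²` for all `0 < ε ≤ 2`. -/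
def IsTwoConvex {E : Type*} [AddCommGroup E] [Module ℝ E]
    (K : Set E) (α : ℝ) : Prop :=
  ∀ ε : ℝ, 0 < ε → ε ≤ 2 → α * ε ^ 2 ≤ modulusOfConvexity K ε

/-- The 2-Firey sum `K +₂ T`: the unit ball of the norm
`‖z‖² = inf { ‖x‖_K² + ‖y‖_T² : z = x + y }`. -/
def fireySum {E : Type*} [AddCommGroup E] [Module ℝ E]
    (K T : Set E) : Set E :=
  { z | sInf { d | ∃ x y : E, z = x + y ∧ d = gauge K x ^ 2 + gauge T y ^ 2 } ≤ 1 }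

/-!
The squared gauge of a body `K` that is 2-convex with constant `γ` satisfies the
parallelogram-type inequality `‖a + b‖² + γ ‖a - b‖² ≤ 2 (‖a‖² + ‖b‖²)`. For `‖b‖ ≤ ‖a‖` write
`a = A • u`, `b = B • v` with `A = ‖a‖`, `B = ‖b‖` and `u, v` on the unit sphere; then
`a ± b = B • (u ± v) + (A - B) • u`, and the modulus of convexity bounds `‖u + v‖` by
`2 - 2 γ ‖u - v‖²`.
This inequality is linear in the squared gauges, so it passes to the infimal convolution
`φ z = inf {‖x‖_K² + ‖y‖_T² : z = x + y}` with `γ = min γK γT`. Now `√φ` is a seminorm whose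
closed unit ball is `K +₂ T`; for `x, y` in that ball with `√φ (x - y) ≥ ε` the inequality gives
`φ (x + y) ≤ 4 - γ ε²`, hence `1 - √φ ((x + y) / 2) ≥ γ ε² / 8`.
The ball contains `K` and lies in the compact set `2 • K + 2 • T`, so it is a convex body.
-/

lemma sq_add_mul_sq_le_of_le {γ A B G P Q : ℝ} (hγ : 0 ≤ γ) (hγ4 : γ ≤ 1 / 4) (hB : 0 ≤ B)
    (hBA : B ≤ A) (hG : 0 ≤ G) (hG2 : G ≤ 2) (hP : 0 ≤ P)
    (hPle : P ≤ A + B - 2 * γ * B * G ^ 2) (hQ : 0 ≤ Q) (hQle : Q ≤ B * G + (A - B)) :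
    P ^ 2 + γ * Q ^ 2 ≤ 2 * (A ^ 2 + B ^ 2) := by
  have hP2 : P ^ 2 ≤ (A + B) ^ 2 - 4 * γ * A * B * G ^ 2 := by
    have hq : 2 * γ * G ^ 2 ≤ 2 := by nlinarith
    nlinarith [mul_nonneg (mul_nonneg hγ hB) (sq_nonneg G), mul_nonneg hB (sub_nonneg.2 hq)]
  have hQ2 : γ * Q ^ 2 ≤ (A - B) ^ 2 + 4 * γ * B ^ 2 * G ^ 2 := by
    have hsq : Q ^ 2 ≤ (B * G + (A - B)) ^ 2 := pow_le_pow_left₀ hQ hQle 2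
    nlinarith [mul_nonneg hγ (sq_nonneg (A - B - 3 * (B * G))),
      mul_nonneg (by linarith : (0 : ℝ) ≤ 3 - 4 * γ) (sq_nonneg (A - B))]
  nlinarith [mul_nonneg (mul_nonneg (mul_nonneg hγ hB) (sub_nonneg.2 hBA)) (sq_nonneg G)]

section Module

variable {E : Type*} [AddCommGroup E] [Module ℝ E] {K T : Set E}

lemma gauge_inv_gauge_smul_self {x : E} (hx : 0 < gauge K x) :
    gauge K ((gauge K x)⁻¹ • x) = 1 := by
  rw [gauge_smul_of_nonneg (inv_nonneg.2 hx.le), smul_eq_mul, inv_mul_cancel₀ hx.ne']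

lemma gauge_half_smul (x : E) : gauge K ((2 : ℝ)⁻¹ • x) = gauge K x / 2 := by
  rw [gauge_smul_of_nonneg (by norm_num), smul_eq_mul, inv_mul_eq_div]

lemma Seminorm.gauge_closedBall (p : Seminorm ℝ E) : gauge (p.closedBall 0 1) = p := by
  refine le_antisymm ?_ fun x => ?_
  · rw [← p.gauge_ball]
    exact gauge_mono (p.absorbent_ball_zero one_pos) (p.ball_subset_closedBall 0 1)
  · refine le_csInf (p.absorbent_closedBall_zero one_pos).gauge_set_nonempty ?_
    rintro r ⟨hr, hx⟩
    rwa [Seminorm.smul_closedBall_zero (norm_pos_iff.2 hr.ne'), p.mem_closedBall_zero,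
      Real.norm_of_nonneg hr.le, mul_one] at hx

namespace IsTwoConvex

variable {γ : ℝ}

lemma mono {γ' : ℝ} (h : IsTwoConvex K γ) (hγ' : γ' ≤ γ) : IsTwoConvex K γ' :=
  fun ε hε hε2 => (mul_le_mul_of_nonneg_right hγ' (sq_nonneg ε)).trans (h ε hε hε2)

lemma nontrivial (h : IsTwoConvex K γ) (hγ : 0 < γ) : Nontrivial E := by
  by_contra hE
  rw [not_nontrivial_iff_subsingleton] at hE
  have hempty : modulusOfConvexity K 1 = 0 := by
    rw [modulusOfConvexity]
    convert Real.sInf_empty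
    refine Set.eq_empty_of_forall_notMem ?_
    rintro _ ⟨x, y, -, -, hxy, -⟩
    rw [Subsingleton.elim (x - y) 0, gauge_zero] at hxy
    linarith
  have := h 1 one_pos one_le_two
  rw [hempty] at this
  linarith

end IsTwoConvex

/-- `‖z‖²` for the norm of the 2-Firey sum, so that `fireySum K T` unfolds to
`{z | fireyGaugeSq K T z ≤ 1}`. -/
def fireyGaugeSq (K T : Set E) (z : E) : ℝ :=
  sInf {d | ∃ x y : E, z = x + y ∧ d = gauge K x ^ 2 + gauge T y ^ 2}

lemma fireyGaugeSq_nonneg (z : E) : 0 ≤ fireyGaugeSq K T z :=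
  le_csInf ⟨_, z, 0, (add_zero z).symm, rfl⟩ (by rintro _ ⟨x, y, -, rfl⟩; positivity)

lemma fireyGaugeSq_le {x y z : E} (h : z = x + y) :
    fireyGaugeSq K T z ≤ gauge K x ^ 2 + gauge T y ^ 2 :=
  csInf_le ⟨0, by rintro _ ⟨x, y, -, rfl⟩; positivity⟩ ⟨x, y, h, rfl⟩

lemma fireyGaugeSq_le_gauge_sq (z : E) : fireyGaugeSq K T z ≤ gauge K z ^ 2 := by
  simpa using fireyGaugeSq_le (K := K) (T := T) (add_zero z).symm

lemma fireyGaugeSq_zero : fireyGaugeSq K T (0 : E) = 0 :=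
  le_antisymm ((fireyGaugeSq_le_gauge_sq 0).trans_eq (by simp)) (fireyGaugeSq_nonneg 0)

lemma exists_eq_add_and_lt_fireyGaugeSq_add (z : E) {θ : ℝ} (hθ : 0 < θ) :
    ∃ x y : E, z = x + y ∧ gauge K x ^ 2 + gauge T y ^ 2 < fireyGaugeSq K T z + θ := by
  obtain ⟨_, ⟨x, y, hz, rfl⟩, hlt⟩ := exists_lt_of_csInf_lt
    (s := {d | ∃ x y : E, z = x + y ∧ d = gauge K x ^ 2 + gauge T y ^ 2})
    ⟨_, z, 0, (add_zero z).symm, rfl⟩ (lt_add_of_pos_right _ hθ)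
  exact ⟨x, y, hz, hlt⟩

lemma le_mul_fireyGaugeSq_add {z : E} {a b c : ℝ} (hc : 0 ≤ c)
    (h : ∀ x y : E, z = x + y → a ≤ c * (gauge K x ^ 2 + gauge T y ^ 2) + b) :
    a ≤ c * fireyGaugeSq K T z + b := by
  rcases hc.eq_or_lt with rfl | hc
  · simpa using h z 0 (add_zero z).symm
  · have : (a - b) / c ≤ fireyGaugeSq K T z := by
      refine le_csInf ⟨_, z, 0, (add_zero z).symm, rfl⟩ ?_
      rintro _ ⟨x, y, hz, rfl⟩
      rw [div_le_iff₀' hc]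
      linarith [h x y hz]
    rw [div_le_iff₀' hc] at this
    linarith

lemma le_mul_fireyGaugeSq_add_mul_fireyGaugeSq {z w : E} {a c c' : ℝ} (hc : 0 ≤ c)
    (hc' : 0 ≤ c')
    (h : ∀ x y x' y' : E, z = x + y → w = x' + y' →
      a ≤ c * (gauge K x ^ 2 + gauge T y ^ 2) + c' * (gauge K x' ^ 2 + gauge T y' ^ 2)) :
    a ≤ c * fireyGaugeSq K T z + c' * fireyGaugeSq K T w := by
  refine le_mul_fireyGaugeSq_add hc fun x y hz => ?_
  rw [add_comm]
  refine le_mul_fireyGaugeSq_add hc' fun x' y' hw => ?_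
  rw [add_comm]
  exact h x y x' y' hz hw

lemma self_subset_fireySum : K ⊆ fireySum K T := fun z hz =>
  (fireyGaugeSq_le_gauge_sq z).trans (pow_le_one₀ (gauge_nonneg z) (gauge_le_one_of_mem hz))

end Module

variable {E : Type*} [NormedAddCommGroup E] [NormedSpace ℝ E] {K T : Set E}

namespace IsSymmConvexBody

variable (hK : IsSymmConvexBody K)
include hK

lemma neg_mem {x : E} (hx : x ∈ K) : -x ∈ K := by
  rw [hK.2.2.2] at hx
  exact hx

lemma zero_mem_interior : (0 : E) ∈ interior K := by
  obtain ⟨x, hx⟩ := hK.2.2.1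
  have hneg : -interior K ⊆ interior K :=
    interior_maximal (fun y hy => by simpa using hK.neg_mem (interior_subset hy))
      isOpen_interior.neg
  simpa using hK.2.1.interior (x := x) (y := -x) hx (hneg (by simpa using hx))
    (a := 1 / 2) (b := 1 / 2) (by norm_num) (by norm_num) (by norm_num)

lemma absorbent : Absorbent ℝ K :=
  absorbent_nhds_zero (mem_interior_iff_mem_nhds.1 hK.zero_mem_interior)

lemma balanced : Balanced ℝ K :=
  (balanced_iff_neg_mem hK.2.1).2 fun _ => hK.neg_mem

lemma gauge_le_one_iff {x : E} : gauge K x ≤ 1 ↔ x ∈ K := by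
  rw [gauge_le_one_iff_mem_closure hK.2.1 (mem_interior_iff_mem_nhds.1 hK.zero_mem_interior),
    hK.1.isClosed.closure_eq]

lemma gauge_add_le (x y : E) : gauge K (x + y) ≤ gauge K x + gauge K y :=
  _root_.gauge_add_le hK.2.1 hK.absorbent x y

lemma gauge_smul (r : ℝ) (x : E) : gauge K (r • x) = |r| * gauge K x :=
  _root_.gauge_smul hK.balanced r x

lemma gauge_neg (x : E) : gauge K (-x) = gauge K x := by
  simpa using hK.gauge_smul (-1) x

lemma gauge_sub_le (x y : E) : gauge K (x - y) ≤ gauge K x + gauge K y := by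
  simpa [sub_eq_add_neg, hK.gauge_neg] using hK.gauge_add_le x (-y)

lemma gauge_smul_add_smul_le {A B : ℝ} (hB : 0 ≤ B) (hBA : B ≤ A) (u v : E) :
    gauge K (A • u + B • v) ≤ B * gauge K (u + v) + (A - B) * gauge K u := by
  have hsplit : A • u + B • v = B • (u + v) + (A - B) • u := by module
  rw [hsplit]
  refine (hK.gauge_add_le _ _).trans_eq ?_
  rw [hK.gauge_smul, hK.gauge_smul, abs_of_nonneg hB, abs_of_nonneg (sub_nonneg.2 hBA)]

lemma exists_gauge_eq_one [Nontrivial E] : ∃ w : E, gauge K w = 1 := by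
  obtain ⟨v, hv⟩ := exists_ne (0 : E)
  exact ⟨_, gauge_inv_gauge_smul_self
    ((gauge_pos hK.absorbent (hK.1.isVonNBounded ℝ)).2 hv)⟩

lemma gauge_sub_neg_self (w : E) : gauge K (w - -w) = 2 * gauge K w := by
  rw [sub_neg_eq_add, ← two_smul ℝ w, hK.gauge_smul, abs_two]

lemma modulusOfConvexity_le {ε : ℝ} {x y : E} (hx : gauge K x ≤ 1) (hy : gauge K y ≤ 1)
    (hε : ε ≤ gauge K (x - y)) :
    modulusOfConvexity K ε ≤ 1 - gauge K ((2 : ℝ)⁻¹ • (x + y)) := by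
  refine csInf_le ⟨0, ?_⟩ ⟨x, y, hx, hy, hε, rfl⟩
  rintro _ ⟨x, y, hx, hy, -, rfl⟩
  have := hK.gauge_add_le x y
  rw [gauge_half_smul]
  linarith

lemma le_modulusOfConvexity [Nontrivial E] {ε c : ℝ} (hε : ε ≤ 2)
    (h : ∀ x y : E, gauge K x ≤ 1 → gauge K y ≤ 1 → ε ≤ gauge K (x - y) →
      c ≤ 1 - gauge K ((2 : ℝ)⁻¹ • (x + y))) :
    c ≤ modulusOfConvexity K ε := by
  obtain ⟨w, hw⟩ := hK.exists_gauge_eq_one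
  have hdiam : ε ≤ gauge K (w - -w) := by rw [hK.gauge_sub_neg_self, hw]; linarith
  refine le_csInf ⟨_, w, -w, hw.le, (hK.gauge_neg w ▸ hw).le, hdiam, rfl⟩ ?_
  rintro _ ⟨x, y, hx, hy, hxy, rfl⟩
  exact h x y hx hy hxy

end IsSymmConvexBody

namespace IsTwoConvex

variable {γ : ℝ}

lemma le_quarter [Nontrivial E] (hK : IsSymmConvexBody K) (h : IsTwoConvex K γ) :
    γ ≤ 1 / 4 := by
  obtain ⟨w, hw⟩ := hK.exists_gauge_eq_one
  have hdiam : 2 ≤ gauge K (w - -w) := by rw [hK.gauge_sub_neg_self, hw]; norm_num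
  have hmod := hK.modulusOfConvexity_le hw.le (hK.gauge_neg w ▸ hw).le hdiam
  rw [add_neg_cancel, smul_zero, gauge_zero] at hmod
  linarith [h 2 two_pos le_rfl]

lemma gauge_add_le_two_sub (hK : IsSymmConvexBody K) (h : IsTwoConvex K γ) {x y : E}
    (hx : gauge K x ≤ 1) (hy : gauge K y ≤ 1) :
    gauge K (x + y) ≤ 2 - 2 * γ * gauge K (x - y) ^ 2 := by
  rcases (gauge_nonneg (x - y) : 0 ≤ gauge K (x - y)).eq_or_lt with hzero | hpos
  · rw [← hzero]
    linarith [hK.gauge_add_le x y]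
  · have hε2 : gauge K (x - y) ≤ 2 := by linarith [hK.gauge_sub_le x y]
    have hmod := hK.modulusOfConvexity_le hx hy le_rfl
    rw [gauge_half_smul] at hmod
    linarith [h _ hpos hε2]

lemma gauge_add_sq_add_mul_gauge_sub_sq_le (hK : IsSymmConvexBody K) (h : IsTwoConvex K γ)
    (hγ : 0 < γ) (a b : E) :
    gauge K (a + b) ^ 2 + γ * gauge K (a - b) ^ 2 ≤ 2 * (gauge K a ^ 2 + gauge K b ^ 2) := by
  wlog hBA : gauge K b ≤ gauge K a generalizing a b
  · have := this b a (le_of_not_ge hBA)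
    rwa [add_comm b, ← neg_sub a, hK.gauge_neg, add_comm (gauge K b ^ 2)] at this
  have := h.nontrivial hγ
  have hγ4 := h.le_quarter hK
  rcases (gauge_nonneg b : 0 ≤ gauge K b).eq_or_lt with hB | hB
  · refine sq_add_mul_sq_le_of_le (G := 0) hγ.le hγ4 (gauge_nonneg _) hBA le_rfl zero_le_two
      (gauge_nonneg _) ?_ (gauge_nonneg _) ?_
    · linarith [hK.gauge_add_le a b]
    · linarith [hK.gauge_sub_le a b]
  set A := gauge K a
  set B := gauge K b
  have hA : 0 < A := hB.trans_le hBA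
  set u := A⁻¹ • a
  set v := B⁻¹ • b
  have hu : gauge K u = 1 := gauge_inv_gauge_smul_self hA
  have hv : gauge K v = 1 := gauge_inv_gauge_smul_self hB
  have ha : a = A • u := (smul_inv_smul₀ hA.ne' a).symm
  have hb : b = B • v := (smul_inv_smul₀ hB.ne' b).symm
  have hG2 : gauge K (u - v) ≤ 2 := by linarith [hK.gauge_sub_le u v]
  refine sq_add_mul_sq_le_of_le hγ.le hγ4 hB.le hBA (gauge_nonneg _) hG2 (gauge_nonneg _)
    ?_ (gauge_nonneg _) ?_
  · have hsum := hK.gauge_smul_add_smul_le hB.le hBA u v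
    rw [← ha, ← hb, hu] at hsum
    nlinarith [h.gauge_add_le_two_sub hK hu.le hv.le]
  · have hdiff := hK.gauge_smul_add_smul_le hB.le hBA u (-v)
    rw [smul_neg, ← ha, ← hb, ← sub_eq_add_neg, ← sub_eq_add_neg, hu] at hdiff
    linarith

end IsTwoConvex

section Symmetric

variable (hK : IsSymmConvexBody K) (hT : IsSymmConvexBody T)
include hK hT

lemma fireyGaugeSq_smul_le (r : ℝ) (z : E) :
    fireyGaugeSq K T (r • z) ≤ r ^ 2 * fireyGaugeSq K T z := by
  refine (le_mul_fireyGaugeSq_add (sq_nonneg r) fun x y hz => ?_).trans_eq (add_zero _)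
  calc fireyGaugeSq K T (r • z) ≤ gauge K (r • x) ^ 2 + gauge T (r • y) ^ 2 :=
        fireyGaugeSq_le (by rw [hz, smul_add])
    _ = r ^ 2 * (gauge K x ^ 2 + gauge T y ^ 2) + 0 := by
        rw [hK.gauge_smul, hT.gauge_smul, mul_pow, mul_pow, sq_abs]
        ring

lemma fireyGaugeSq_add_le {c : ℝ} (hc : 0 < c) (z w : E) :
    fireyGaugeSq K T (z + w)
      ≤ (1 + c) * fireyGaugeSq K T z + (1 + c⁻¹) * fireyGaugeSq K T w := by
  have hweighted (p q : ℝ) : (p + q) ^ 2 ≤ (1 + c) * p ^ 2 + (1 + c⁻¹) * q ^ 2 := by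
    have hid : (1 + c) * p ^ 2 + (1 + c⁻¹) * q ^ 2 - (p + q) ^ 2 = (c * p - q) ^ 2 / c := by
      field_simp
      ring
    have : 0 ≤ (c * p - q) ^ 2 / c := by positivity
    linarith
  have hsq {S : Set E} (hS : IsSymmConvexBody S) (p q : E) :
      gauge S (p + q) ^ 2 ≤ (1 + c) * gauge S p ^ 2 + (1 + c⁻¹) * gauge S q ^ 2 :=
    (pow_le_pow_left₀ (gauge_nonneg _) (hS.gauge_add_le p q) 2).trans (hweighted _ _)
  refine le_mul_fireyGaugeSq_add_mul_fireyGaugeSq (by positivity) (by positivity)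
    fun x y x' y' hz hw => ?_
  have hdecomp : z + w = (x + x') + (y + y') := by rw [hz, hw]; abel
  linarith [fireyGaugeSq_le (K := K) (T := T) hdecomp, hsq hK x x', hsq hT y y']

lemma sqrt_fireyGaugeSq_add_le (z w : E) :
    √(fireyGaugeSq K T (z + w)) ≤ √(fireyGaugeSq K T z) + √(fireyGaugeSq K T w) := by
  refine le_of_forall_pos_le_add fun η hη => ?_
  set s := √(fireyGaugeSq K T z) + η / 2
  set t := √(fireyGaugeSq K T w) + η / 2
  have hs : 0 < s := by positivity
  have ht : 0 < t := by positivity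
  have hzs : fireyGaugeSq K T z ≤ s ^ 2 :=
    (Real.sqrt_le_iff.1 (le_add_of_nonneg_right (by positivity))).2
  have hwt : fireyGaugeSq K T w ≤ t ^ 2 :=
    (Real.sqrt_le_iff.1 (le_add_of_nonneg_right (by positivity))).2
  have hsum : fireyGaugeSq K T (z + w) ≤ (s + t) ^ 2 := by
    calc fireyGaugeSq K T (z + w)
        ≤ (1 + t / s) * fireyGaugeSq K T z + (1 + (t / s)⁻¹) * fireyGaugeSq K T w :=
          fireyGaugeSq_add_le hK hT (by positivity) z w
      _ ≤ (1 + t / s) * s ^ 2 + (1 + (t / s)⁻¹) * t ^ 2 := by gcongr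
      _ = (s + t) ^ 2 := by field_simp; ring
  calc √(fireyGaugeSq K T (z + w)) ≤ s + t := Real.sqrt_le_iff.2 ⟨by positivity, hsum⟩
    _ = _ := by ring

def fireySeminorm : Seminorm ℝ E :=
  Seminorm.ofSMulLE (fun z => √(fireyGaugeSq K T z))
    (by simp only [fireyGaugeSq_zero, Real.sqrt_zero])
    (sqrt_fireyGaugeSq_add_le hK hT)
    fun r z => by
      rw [Real.norm_eq_abs, ← Real.sqrt_sq_eq_abs, ← Real.sqrt_mul (sq_nonneg r)]
      exact Real.sqrt_le_sqrt (fireyGaugeSq_smul_le hK hT r z)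

lemma fireySeminorm_sq (z : E) : fireySeminorm hK hT z ^ 2 = fireyGaugeSq K T z :=
  Real.sq_sqrt (fireyGaugeSq_nonneg z)

lemma fireySum_eq_closedBall : fireySum K T = (fireySeminorm hK hT).closedBall 0 1 := by
  ext z
  rw [Seminorm.mem_closedBall_zero]
  exact Real.sqrt_le_one.symm

lemma gauge_fireySum : gauge (fireySum K T) = fireySeminorm hK hT := by
  rw [fireySum_eq_closedBall hK hT, Seminorm.gauge_closedBall]

lemma continuous_fireySeminorm : Continuous (fireySeminorm hK hT) :=
  Seminorm.continuous' (r := 1) <| by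
    rw [← fireySum_eq_closedBall hK hT]
    exact Filter.mem_of_superset (mem_interior_iff_mem_nhds.1 hK.zero_mem_interior)
      self_subset_fireySum

open scoped Pointwise in
lemma fireySum_subset_two_smul_add_two_smul : fireySum K T ⊆ (2 : ℝ) • K + (2 : ℝ) • T := by
  have hmem {S : Set E} (hS : IsSymmConvexBody S) {x : E} (hx : gauge S x ^ 2 < 2) :
      x ∈ (2 : ℝ) • S := by
    rw [Set.mem_smul_set_iff_inv_smul_mem₀ two_ne_zero, ← hS.gauge_le_one_iff, gauge_half_smul]
    nlinarith [gauge_nonneg (s := S) x]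
  intro z hz
  obtain ⟨x, y, rfl, hlt⟩ := exists_eq_add_and_lt_fireyGaugeSq_add (K := K) (T := T) z one_pos
  have hz' : fireyGaugeSq K T (x + y) ≤ 1 := hz
  exact Set.add_mem_add (hmem hK (by nlinarith [sq_nonneg (gauge T y)]))
    (hmem hT (by nlinarith [sq_nonneg (gauge K x)]))

lemma fireyGaugeSq_add_add_mul_sub_le {γ : ℝ} (h2K : IsTwoConvex K γ)
    (h2T : IsTwoConvex T γ) (hγ : 0 < γ) (z w : E) :
    fireyGaugeSq K T (z + w) + γ * fireyGaugeSq K T (z - w)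
      ≤ 2 * fireyGaugeSq K T z + 2 * fireyGaugeSq K T w := by
  refine le_mul_fireyGaugeSq_add_mul_fireyGaugeSq zero_le_two zero_le_two
    fun x y x' y' hz hw => ?_
  have hsum : z + w = (x + x') + (y + y') := by rw [hz, hw]; abel
  have hdiff : z - w = (x - x') + (y - y') := by rw [hz, hw]; abel
  have hsub := mul_le_mul_of_nonneg_left (fireyGaugeSq_le (K := K) (T := T) hdiff) hγ.le
  linarith [fireyGaugeSq_le (K := K) (T := T) hsum,
    h2K.gauge_add_sq_add_mul_gauge_sub_sq_le hK hγ x x',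
    h2T.gauge_add_sq_add_mul_gauge_sub_sq_le hT hγ y y']

theorem isSymmConvexBody_fireySum : IsSymmConvexBody (fireySum K T) := by
  have hclosed : IsClosed (fireySum K T) := by
    rw [fireySum_eq_closedBall hK hT, Seminorm.closedBall_zero_eq]
    exact isClosed_le (continuous_fireySeminorm hK hT) continuous_const
  refine ⟨((hK.1.smul _).add (hT.1.smul _)).of_isClosed_subset hclosed
      (fireySum_subset_two_smul_add_two_smul hK hT), ?_,
    ⟨0, interior_mono self_subset_fireySum hK.zero_mem_interior⟩, ?_⟩
  · rw [fireySum_eq_closedBall hK hT]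
    exact Seminorm.convex_closedBall _ _ _
  · ext z
    rw [Set.mem_neg, fireySum_eq_closedBall hK hT, Seminorm.mem_closedBall_zero,
      Seminorm.mem_closedBall_zero, map_neg_eq_map]

theorem isTwoConvex_fireySum {γK γT : ℝ} (hγK : 0 < γK) (hγT : 0 < γT)
    (h2K : IsTwoConvex K γK) (h2T : IsTwoConvex T γT) :
    IsTwoConvex (fireySum K T) (min γK γT / 8) := by
  have := h2K.nontrivial hγK
  have hγ : 0 < min γK γT := lt_min hγK hγT
  intro ε hε hε2
  refine (isSymmConvexBody_fireySum hK hT).le_modulusOfConvexity hε2 fun x y hx hy hxy => ?_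
  simp only [gauge_fireySum hK hT, map_smul_eq_mul,
    Real.norm_of_nonneg (by norm_num : (0 : ℝ) ≤ 2⁻¹)] at hx hy hxy ⊢
  have hconv := fireyGaugeSq_add_add_mul_sub_le hK hT (h2K.mono (min_le_left γK γT))
    (h2T.mono (min_le_right γK γT)) hγ x y
  simp only [← fireySeminorm_sq hK hT] at hconv
  have hε' : ε ^ 2 ≤ fireySeminorm hK hT (x - y) ^ 2 := pow_le_pow_left₀ hε.le hxy 2
  have hx2 := pow_le_one₀ (apply_nonneg _ x) hx (n := 2)
  have hy2 := pow_le_one₀ (apply_nonneg _ y) hy (n := 2)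
  have hsum : fireySeminorm hK hT (x + y) ^ 2 ≤ 4 - min γK γT * ε ^ 2 := by
    nlinarith [mul_le_mul_of_nonneg_left hε' hγ.le]
  have hsqrt (P U : ℝ) (hP : 0 ≤ P) (h : P ^ 2 ≤ 4 - U) : U / 8 ≤ 1 - 2⁻¹ * P := by
    have hpos : 0 ≤ 2 - U / 4 := by nlinarith
    have := (pow_le_pow_iff_left₀ hP hpos two_ne_zero).1 (by nlinarith [sq_nonneg U])
    linarith
  linarith [hsqrt _ _ (apply_nonneg _ _) hsum]

end Symmetric

theorem twoConvex_fireySum {n : ℕ}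
    (K T : Set (EuclideanSpace ℝ (Fin n))) (γK γT : ℝ)
    (hK : IsSymmConvexBody K) (hT : IsSymmConvexBody T)
    (hγK : 0 < γK) (hγT : 0 < γT)
    (h2K : IsTwoConvex K γK) (h2T : IsTwoConvex T γT) :
    IsSymmConvexBody (fireySum K T) ∧
    IsTwoConvex (fireySum K T) (min γK γT / 8) :=
  ⟨isSymmConvexBody_fireySum hK hT, isTwoConvex_fireySum hK hT hγK hγT h2K h2T⟩
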